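/- One-step refinement of pa-intervals via forward stepping: if [b,e] is the pa-interval for P[1..j-1] at column j, and b̃ (resp. ẽ) are the minimal and maximal indices in [b,e] with PBWT_j[·] = P[j] (assuming they exist), then the pa-interval for P[1..j] at column j+1 equals [fore[b̃][j], fore[ẽ][j]]. -/

import Mathlib

namespace PBWT

/-- The reversed prefix of length `j` (truncated at `w`) of haplotype `i`:
used to express the co-lexicographic order of prefixes. -/
def revPrefix {h w : ℕ} (S : Fin h → Fin w → ℕ) (j : ℕ) (i : Fin h) : List ℕ :=
  ((List.range j).filterMap (fun t => if ht : t < w then some (S i ⟨t, ht⟩) else none)).reverse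

/-- `PA` is the stable sort of the haplotype indices by the co-lexicographic
order of their prefixes of length `j` (ties broken by original index). -/
def IsStableSort {h w : ℕ} (S : Fin h → Fin w → ℕ) (j : ℕ) (PA : Fin h ≃ Fin h) : Prop :=
  ∀ a b : Fin h, a < b →
    List.Lex (· < ·) (revPrefix S j (PA a)) (revPrefix S j (PA b)) ∨
      (revPrefix S j (PA a) = revPrefix S j (PA b) ∧ (PA a).val < (PA b).val)

/-- Number of maximal runs of equal adjacent values in the sequence `f`. -/
def runCount {α : Type*} [DecidableEq α] {n : ℕ} (f : Fin n → α) : ℕ :=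
  ((List.ofFn f).destutter (· ≠ ·)).length

/-- `h''`: the number of indices `i` with `S i ≠ S (i+1)`. -/
noncomputable def adjDiff {h w : ℕ} (S : Fin h → Fin w → ℕ) : ℕ :=
  Nat.card {i : Fin h // ∃ h1 : (i : ℕ) + 1 < h, S i ≠ S ⟨(i : ℕ) + 1, h1⟩}

/-- Haplotype `k` matches the pattern `P` on its first `t` positions. -/
def Matches {h w : ℕ} (S : Fin h → Fin w → ℕ) (P : ℕ → ℕ) (t : ℕ) (k : Fin h) : Prop :=
  ∀ s : ℕ, ∀ hs : s < w, s < t → S k ⟨s, hs⟩ = P s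

/-!
In a stable co-lexicographic sort, the rows whose prefixes share a key form a contiguous
block, inside which rows are ordered by haplotype index. The haplotypes matching `P[1..j]`
are the block `[b, e]` at column `j`; those that also match `P[j]` lie between rows `b̃` and
`ẽ`, so `PA_j[b̃]` and `PA_j[ẽ]` are the smallest and largest of them. At column `j + 1` they
form a block ordered by index again, which therefore runs from the row of `PA_j[b̃]` to the
row of `PA_j[ẽ]`.
-/

section

variable {h w : ℕ} (S : Fin h → Fin w → ℕ)

lemma revPrefix_zero (i : Fin h) : revPrefix S 0 i = [] := by
  simp [revPrefix]

lemma revPrefix_succ {m : ℕ} (hm : m < w) (i : Fin h) :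
    revPrefix S (m + 1) i = S i ⟨m, hm⟩ :: revPrefix S m i := by
  simp [revPrefix, List.range_succ, List.filterMap_append, hm]

lemma revPrefix_eq_iff {m : ℕ} (hm : m ≤ w) (k k' : Fin h) :
    revPrefix S m k = revPrefix S m k' ↔
      ∀ t (ht : t < w), t < m → S k ⟨t, ht⟩ = S k' ⟨t, ht⟩ := by
  induction m with
  | zero => simp [revPrefix_zero]
  | succ m ih =>
    have hmw : m < w := hm
    rw [revPrefix_succ S hmw, revPrefix_succ S hmw, List.cons.injEq, ih hmw.le]
    constructor
    · rintro ⟨hlast, hinit⟩ t ht htm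
      rcases Nat.lt_succ_iff_lt_or_eq.mp htm with htm | rfl
      exacts [hinit t ht htm, hlast]
    · intro hall
      exact ⟨hall m hmw m.lt_succ_self, fun t ht htm => hall t ht (Nat.lt_succ_of_lt htm)⟩

variable {S} {P : ℕ → ℕ}

lemma matches_succ_iff {m : ℕ} (hm : m < w) (k : Fin h) :
    Matches S P (m + 1) k ↔ Matches S P m k ∧ S k ⟨m, hm⟩ = P m := by
  constructor
  · intro hk
    exact ⟨fun s hs hsm => hk s hs (Nat.lt_succ_of_lt hsm), hk m hm m.lt_succ_self⟩
  · rintro ⟨hk, hkm⟩ s hs hsm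
    rcases Nat.lt_succ_iff_lt_or_eq.mp hsm with hsm | rfl
    exacts [hk s hs hsm, hkm]

lemma Matches.revPrefix_eq {m : ℕ} (hm : m ≤ w) {k k' : Fin h} (hk : Matches S P m k)
    (hk' : Matches S P m k') : revPrefix S m k = revPrefix S m k' :=
  (revPrefix_eq_iff S hm k k').2 fun t ht htm => (hk t ht htm).trans (hk' t ht htm).symm

lemma Matches.of_revPrefix_eq {m : ℕ} (hm : m ≤ w) {k k' : Fin h}
    (heq : revPrefix S m k = revPrefix S m k') (hk' : Matches S P m k') :
    Matches S P m k := fun s hs hsm =>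
  ((revPrefix_eq_iff S hm k k').1 heq s hs hsm).trans (hk' s hs hsm)

namespace IsStableSort

variable {m : ℕ} {PA : Fin h ≃ Fin h} (hPA : IsStableSort S m PA)
include hPA

-- `List.Lex (· < ·)` in `IsStableSort` is definitionally the `<` of the linear order on `List ℕ`.
lemma revPrefix_monotone : Monotone fun a => revPrefix S m (PA a) := by
  intro a b hab
  rcases hab.lt_or_eq with hab | rfl
  · rcases hPA a b hab with hlt | ⟨heq, -⟩
    exacts [le_of_lt hlt, heq.le]
  · exact le_rfl

lemma val_lt_of_lt {a b : Fin h} (hab : a < b)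
    (heq : revPrefix S m (PA a) = revPrefix S m (PA b)) : PA a < PA b := by
  rcases hPA a b hab with hlt | ⟨-, hlt⟩
  · exact absurd heq (ne_of_lt hlt)
  · exact hlt

lemma le_iff_of_revPrefix_eq {a b : Fin h}
    (heq : revPrefix S m (PA a) = revPrefix S m (PA b)) : a ≤ b ↔ PA a ≤ PA b := by
  constructor
  · intro hab
    rcases hab.lt_or_eq with hab | rfl
    exacts [(hPA.val_lt_of_lt hab heq).le, le_rfl]
  · intro hab
    by_contra hba
    exact (hPA.val_lt_of_lt (not_le.1 hba) heq.symm).not_ge hab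

lemma revPrefix_eq_of_le_of_le {a i c : Fin h} (hai : a ≤ i) (hic : i ≤ c)
    (heq : revPrefix S m (PA a) = revPrefix S m (PA c)) :
    revPrefix S m (PA i) = revPrefix S m (PA a) :=
  le_antisymm (heq ▸ hPA.revPrefix_monotone hic) (hPA.revPrefix_monotone hai)

lemma matches_of_le_of_le (hm : m ≤ w) {a i c : Fin h} (hai : a ≤ i) (hic : i ≤ c)
    (ha : Matches S P m (PA a)) (hc : Matches S P m (PA c)) : Matches S P m (PA i) :=
  .of_revPrefix_eq hm (hPA.revPrefix_eq_of_le_of_le hai hic (ha.revPrefix_eq hm hc)) ha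

lemma le_iff_of_matches (hm : m ≤ w) {a b : Fin h} (ha : Matches S P m (PA a))
    (hb : Matches S P m (PA b)) : a ≤ b ↔ PA a ≤ PA b :=
  hPA.le_iff_of_revPrefix_eq (ha.revPrefix_eq hm hb)

end IsStableSort

end

theorem stmt19 (h w : ℕ) (S : Fin h → Fin w → ℕ) (P : ℕ → ℕ) (j : ℕ) (hj : j < w)
    (PA1 PA2 : Fin h ≃ Fin h)
    (hPA1 : IsStableSort S j PA1) (hPA2 : IsStableSort S (j + 1) PA2)
    (b e : Fin h)
    (hpa : ∀ i : Fin h, (b ≤ i ∧ i ≤ e) ↔ Matches S P j (PA1 i))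
    (bt et : Fin h)
    (hbt : b ≤ bt ∧ bt ≤ e ∧ S (PA1 bt) ⟨j, hj⟩ = P j ∧
      ∀ t : Fin h, b ≤ t → t < bt → S (PA1 t) ⟨j, hj⟩ ≠ P j)
    (het : b ≤ et ∧ et ≤ e ∧ S (PA1 et) ⟨j, hj⟩ = P j ∧
      ∀ t : Fin h, et < t → t ≤ e → S (PA1 t) ⟨j, hj⟩ ≠ P j) :
    ∀ i : Fin h, (PA2.symm (PA1 bt) ≤ i ∧ i ≤ PA2.symm (PA1 et)) ↔
      Matches S P (j + 1) (PA2 i) := by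
  obtain ⟨hbb, hbe, hbP, hbmin⟩ := hbt
  obtain ⟨heb, hee, heP, hemax⟩ := het
  have hbj : Matches S P j (PA1 bt) := (hpa bt).1 ⟨hbb, hbe⟩
  have hej : Matches S P j (PA1 et) := (hpa et).1 ⟨heb, hee⟩
  have hMb : Matches S P (j + 1) (PA1 bt) := (matches_succ_iff hj _).2 ⟨hbj, hbP⟩
  have hMe : Matches S P (j + 1) (PA1 et) := (matches_succ_iff hj _).2 ⟨hej, heP⟩
  have hbounds : ∀ k, Matches S P (j + 1) k → PA1 bt ≤ k ∧ k ≤ PA1 et := by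
    intro k hk
    obtain ⟨hkj, hkP⟩ := (matches_succ_iff hj k).1 hk
    rw [← PA1.apply_symm_apply k] at hkj hkP ⊢
    obtain ⟨hbt, hte⟩ := (hpa _).2 hkj
    have hbt_le : bt ≤ PA1.symm k := not_lt.1 fun hlt => hbmin _ hbt hlt hkP
    have hle_et : PA1.symm k ≤ et := not_lt.1 fun hlt => hemax _ hlt hte hkP
    exact ⟨(hPA1.le_iff_of_matches hj.le hbj hkj).1 hbt_le,
      (hPA1.le_iff_of_matches hj.le hkj hej).1 hle_et⟩
  have hb₂ : Matches S P (j + 1) (PA2 (PA2.symm (PA1 bt))) := by simpa using hMb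
  have he₂ : Matches S P (j + 1) (PA2 (PA2.symm (PA1 et))) := by simpa using hMe
  intro i
  constructor
  · rintro ⟨hbi, hie⟩
    exact hPA2.matches_of_le_of_le hj hbi hie hb₂ he₂
  · intro hi
    obtain ⟨hbi, hie⟩ := hbounds _ hi
    exact ⟨(hPA2.le_iff_of_matches hj hb₂ hi).2 (by simpa using hbi),
      (hPA2.le_iff_of_matches hj hi he₂).2 (by simpa using hie)⟩

end PBWT
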